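/- If G is a connected graph of order n, maximum degree 3, and girth at least 5, then Z(G) ≤ n/2 − n/(24·log₂(n) + 6) + 2. -/

import Mathlib

namespace SimpleGraph

variable {V : Type*}

/-- `G.ZeroForces Z v` : vertex `v` is eventually colored when starting from `Z`
and iteratively adding any vertex that is the unique uncolored neighbor of a colored vertex. -/
inductive ZeroForces (G : SimpleGraph V) (Z : Set V) : V → Prop
  | base {v : V} : v ∈ Z → ZeroForces G Z v
  | force {v u : V} : ZeroForces G Z v → G.Adj v u →
      (∀ w, G.Adj v w → w ≠ u → ZeroForces G Z w) → ZeroForces G Z u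

/-- The forcing closure `F(Z)`. -/
def zfClosure (G : SimpleGraph V) (Z : Set V) : Set V := {v | G.ZeroForces Z v}

/-- `Z` is a zero forcing set of `G`. -/
def IsZeroForcingSet (G : SimpleGraph V) (Z : Set V) : Prop := ∀ v, G.ZeroForces Z v

/-- The zero forcing number `Z(G)`. -/
noncomputable def zeroForcingNumber (G : SimpleGraph V) [Fintype V] : ℕ :=
  sInf {k | ∃ Z : Finset V, Z.card = k ∧ G.IsZeroForcingSet ↑Z}

end SimpleGraph

/-!
Colour vertices in rounds, starting from the forcing closure of an edge and keeping the coloured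
set `B` closed under forcing. A round puts one vertex into the zero forcing set and closes again:
an uncoloured leaf with an uncoloured neighbour if there is one, and otherwise the second
uncoloured neighbour of a boundary vertex (in a closed `B`, a vertex of degree at most `3` with a
neighbour in `B` has none or exactly two uncoloured neighbours). Progress is measured by the
potential `77 |Bᶜ| + 12 L + 2 P - 7 E`, where `L` counts uncoloured leaves, `P` those attached to
`B` and `E` the edges between `Bᶜ` and `B`. A round colours at least two vertices and lowers the
potential by at least `56` per new vertex; when it colours exactly two, girth `≥ 5` pins down
their neighbourhoods and the drop is `84` each, so every round lowers the potential by `168`.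
The potential is at most `83 n - 142` at the start and `0` at the end, so there are at most
`(83 n - 142) / 168` rounds, and also at most `(n - 2) / 2`; the first bound gives the claim for
`n ≥ 128`, the second below.
-/

open Finset

namespace Finset

variable {V : Type*} [Fintype V] [DecidableEq V] {B B' : Finset V}

theorem sum_compl_eq_sum_compl_add_sum_sdiff {M : Type*} [AddCommMonoid M] (h : B ⊆ B')
    (f : V → M) : ∑ v ∈ Bᶜ, f v = ∑ v ∈ B'ᶜ, f v + ∑ v ∈ B' \ B, f v := by
  rw [← sum_sdiff (compl_subset_compl.2 h), compl_sdiff_compl, add_comm]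

theorem card_compl_eq_card_compl_add_card_sdiff (h : B ⊆ B') : #Bᶜ = #B'ᶜ + #(B' \ B) := by
  simp only [card_eq_sum_ones]
  exact sum_compl_eq_sum_compl_add_sum_sdiff h _

end Finset

namespace SimpleGraph

variable {V : Type*} {G : SimpleGraph V}

theorem not_adj_of_four_le_egirth (hg : 4 ≤ G.egirth) {a b c : V} (hab : G.Adj a b)
    (hbc : G.Adj b c) : ¬G.Adj c a := by
  intro hca
  have hcyc : (Walk.cons hab (.cons hbc (.cons hca .nil))).IsCycle := by
    rw [Walk.cons_isCycle_iff]
    simp [hbc.ne, hca.ne, hab.ne, hca.ne.symm, hab.ne.symm]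
  have := (G.egirth_le_length hcyc).trans' hg
  norm_num at this

theorem eq_of_adj_of_five_le_egirth (hg : 5 ≤ G.egirth) {v o b b' : V} (hvo : v ≠ o)
    (hbv : G.Adj b v) (hbo : G.Adj b o) (hb'v : G.Adj b' v) (hb'o : G.Adj b' o) : b = b' := by
  by_contra hbb'
  have hcyc : (Walk.cons hbv (.cons hb'v.symm (.cons hb'o (.cons hbo.symm .nil)))).IsCycle := by
    rw [Walk.cons_isCycle_iff]
    simp [hbv.ne, hb'o.ne, hbo.ne, hbv.ne.symm, hb'v.ne.symm, hbo.ne.symm, hvo, hbb', Ne.symm hbb']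
  have := (G.egirth_le_length hcyc).trans' hg
  norm_num at this

theorem ZeroForces.mono {Z Z' : Set V} (h : Z ⊆ Z') {v : V} (hv : G.ZeroForces Z v) :
    G.ZeroForces Z' v := by
  induction hv with
  | base hz => exact .base (h hz)
  | force _ hadj _ ih₁ ih₂ => exact .force ih₁ hadj ih₂

theorem ZeroForces.trans {Z Z₀ : Set V} (h : ∀ x ∈ Z, G.ZeroForces Z₀ x) {v : V}
    (hv : G.ZeroForces Z v) : G.ZeroForces Z₀ v := by
  induction hv with
  | base hz => exact h _ hz
  | force _ hadj _ ih₁ ih₂ => exact .force ih₁ hadj ih₂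

theorem IsZeroForcingSet.mono {Z Z' : Set V} (h : Z ⊆ Z') (hZ : G.IsZeroForcingSet Z) :
    G.IsZeroForcingSet Z' :=
  fun v => (hZ v).mono h

def IsForcingClosed (G : SimpleGraph V) (B : Finset V) : Prop :=
  ∀ v ∈ B, ∀ u, G.Adj v u → u ∉ B → ∃ w, G.Adj v w ∧ w ∉ B ∧ w ≠ u

def IsLinked (G : SimpleGraph V) (B : Finset V) : Prop :=
  ∀ v ∈ B, ∃ w ∈ B, G.Adj v w

section Closure

variable [Fintype V]

noncomputable def zfClosureFinset (G : SimpleGraph V) (Z : Set V) : Finset V :=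
  (Set.toFinite (G.zfClosure Z)).toFinset

@[simp]
theorem mem_zfClosureFinset {Z : Set V} {v : V} :
    v ∈ G.zfClosureFinset Z ↔ G.ZeroForces Z v := by
  simp [zfClosureFinset, zfClosure]

theorem subset_zfClosureFinset (Z : Set V) : Z ⊆ G.zfClosureFinset Z :=
  fun _ hz => mem_zfClosureFinset.2 (.base hz)

theorem subset_zfClosureFinset_insert (B : Finset V) (y : V) :
    B ⊆ G.zfClosureFinset (insert y ↑B) :=
  fun _ hx => subset_zfClosureFinset _ (Set.mem_insert_of_mem _ hx)

theorem mem_zfClosureFinset_insert (B : Finset V) (y : V) :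
    y ∈ G.zfClosureFinset (insert y ↑B) :=
  subset_zfClosureFinset _ (Set.mem_insert _ _)

theorem isForcingClosed_zfClosureFinset (Z : Set V) :
    G.IsForcingClosed (G.zfClosureFinset Z) := by
  intro v hv u hadj hu
  by_contra! h
  refine hu <| mem_zfClosureFinset.2 <| .force (mem_zfClosureFinset.1 hv) hadj fun w hw hwu => ?_
  by_contra hw'
  exact hwu (h w hw (mt mem_zfClosureFinset.1 hw'))

theorem isLinked_zfClosureFinset {Z : Set V}
    (h : ∀ x ∈ Z, ∃ w, G.Adj x w ∧ G.ZeroForces Z w) :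
    G.IsLinked (G.zfClosureFinset Z) := by
  intro v hv
  induction mem_zfClosureFinset.1 hv with
  | base hz =>
    obtain ⟨w, hw, hzw⟩ := h _ hz
    exact ⟨w, mem_zfClosureFinset.2 hzw, hw⟩
  | force hx hadj _ _ _ => exact ⟨_, mem_zfClosureFinset.2 hx, hadj.symm⟩

theorem IsLinked.zfClosureFinset_insert [DecidableEq V] {B : Finset V} (hB : G.IsLinked B)
    {y z : V} (hyz : G.Adj y z) (hz : G.ZeroForces (insert y ↑B) z) :
    G.IsLinked (G.zfClosureFinset (insert y ↑B)) := by
  refine isLinked_zfClosureFinset fun x hx => ?_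
  rcases hx with rfl | hx
  · exact ⟨z, hyz, hz⟩
  · obtain ⟨w, hw, hxw⟩ := hB x hx
    exact ⟨w, hxw, .base (Set.mem_insert_of_mem _ hw)⟩

theorem isZeroForcingSet_of_zfClosureFinset_union {Z X : Set V}
    (h : G.IsZeroForcingSet (↑(G.zfClosureFinset Z) ∪ X)) : G.IsZeroForcingSet (Z ∪ X) := by
  refine fun v => (h v).trans fun x hx => ?_
  rcases hx with hx | hx
  · exact (mem_zfClosureFinset.1 hx).mono Set.subset_union_left
  · exact .base (Set.mem_union_right _ hx)

theorem zeroForcingNumber_le_card {Z : Finset V} (h : G.IsZeroForcingSet ↑Z) :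
    G.zeroForcingNumber ≤ #Z :=
  Nat.sInf_le ⟨Z, rfl, h⟩

theorem Preconnected.exists_adj_mem_notMem (hpre : G.Preconnected) {B : Finset V}
    (hne : B.Nonempty) (hnu : B ≠ univ) : ∃ b ∈ B, ∃ u ∉ B, G.Adj b u := by
  obtain ⟨v, hv⟩ := hne
  obtain ⟨w, hw⟩ : ∃ w, w ∉ B := by simpa [eq_univ_iff_forall] using hnu
  obtain ⟨d, -, hd₁, hd₂⟩ := (hpre v w).some.exists_boundary_dart (B : Set V) hv hw
  exact ⟨d.fst, hd₁, d.snd, hd₂, d.adj⟩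

end Closure

theorem Connected.two_mul_card_degree_eq_one_le [Fintype V] [DecidableRel G.Adj]
    (hconn : G.Connected) (hdeg : ∀ v, G.degree v ≤ 3) :
    2 * #{v | G.degree v = 1} ≤ Fintype.card V + 2 := by
  have hE := hconn.card_vert_le_card_edgeSet_add_one
  rw [Nat.card_eq_fintype_card, Nat.card_eq_fintype_card, ← edgeFinset_card] at hE
  have hsum : ∑ v, (G.degree v + 2 * if G.degree v = 1 then 1 else 0) ≤ ∑ _v : V, 3 :=
    sum_le_sum fun v _ => by have := hdeg v; split_ifs <;> omega
  rw [sum_add_distrib, ← mul_sum, ← card_filter, sum_degrees_eq_twice_card_edges, sum_const,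
    card_univ, smul_eq_mul] at hsum
  omega

theorem zeroForces_insert_of_neighborFinset_eq_singleton [Fintype V] [DecidableRel G.Adj]
    {Z : Set V} {l x : V} (hx : G.neighborFinset l = {x}) : G.ZeroForces (insert l Z) x := by
  have hlx : G.Adj l x := (G.mem_neighborFinset _ _).1 (hx ▸ mem_singleton_self x)
  refine .force (.base (Set.mem_insert _ _)) hlx fun w hw hwx => absurd ?_ hwx
  rw [← mem_singleton, ← hx, mem_neighborFinset]
  exact hw

section Degrees

variable [Fintype V] [DecidableEq V] [DecidableRel G.Adj] {B B' : Finset V}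

variable (G) in
def degIn (B : Finset V) (v : V) : ℕ := #(G.neighborFinset v ∩ B)

variable (G) in
def degOut (B : Finset V) (v : V) : ℕ := #(G.neighborFinset v \ B)

variable (G) in
theorem degIn_add_degOut (B : Finset V) (v : V) : G.degIn B v + G.degOut B v = G.degree v := by
  rw [degIn, degOut, card_inter_add_card_sdiff, card_neighborFinset_eq_degree]

theorem degIn_eq_add (h : B ⊆ B') (v : V) :
    G.degIn B' v = G.degIn B v + #(G.neighborFinset v ∩ (B' \ B)) := by
  rw [degIn, degIn, ← card_union_of_disjoint, ← inter_union_distrib_left,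
    union_sdiff_of_subset h]
  exact disjoint_sdiff.mono inter_subset_right inter_subset_right

theorem degIn_of_neighborFinset_eq_singleton {v x : V} (hx : G.neighborFinset v = {x}) :
    G.degIn B v = if x ∈ B then 1 else 0 := by
  split_ifs with hxB <;> simp [degIn, hx, hxB]

theorem IsForcingClosed.degOut_ne_one (hB : G.IsForcingClosed B) {v : V} (hv : v ∈ B) :
    G.degOut B v ≠ 1 := by
  intro h
  obtain ⟨u, hu⟩ := card_eq_one.1 h
  have hu' : u ∈ G.neighborFinset v \ B := hu ▸ mem_singleton_self u
  rw [mem_sdiff, mem_neighborFinset] at hu'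
  obtain ⟨w, hw, hwB, hwu⟩ := hB v hv u hu'.1 hu'.2
  have hw' : w ∈ G.neighborFinset v \ B := mem_sdiff.2 ⟨(G.mem_neighborFinset v w).2 hw, hwB⟩
  rw [hu, mem_singleton] at hw'
  exact hwu hw'

theorem IsForcingClosed.degree_eq_one_or_three (hB : G.IsForcingClosed B)
    (hdeg : ∀ v, G.degree v ≤ 3) {v : V} (hv : v ∈ B) (h : G.degIn B v = 1) :
    G.degree v = 1 ∧ G.degOut B v = 0 ∨ G.degree v = 3 ∧ G.degOut B v = 2 := by
  have := G.degIn_add_degOut B v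
  have := hB.degOut_ne_one hv
  have := hdeg v
  omega

theorem IsLinked.degOut_le_two (hB : G.IsLinked B) (hdeg : ∀ v, G.degree v ≤ 3) {b : V}
    (hb : b ∈ B) : G.degOut B b ≤ 2 := by
  obtain ⟨w, hw, hbw⟩ := hB b hb
  have : 0 < G.degIn B b :=
    card_pos.2 ⟨w, mem_inter.2 ⟨(G.mem_neighborFinset b w).2 hbw, hw⟩⟩
  have := G.degIn_add_degOut B b
  have := hdeg b
  omega

theorem IsLinked.eq_or_eq_of_adj (hB : G.IsLinked B) (hdeg : ∀ v, G.degree v ≤ 3)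
    {b u y w : V} (hb : b ∈ B) (hu : G.Adj b u) (hy : G.Adj b y) (hw : G.Adj b w) (huB : u ∉ B)
    (hyB : y ∉ B) (hwB : w ∉ B) (huy : u ≠ y) : w = u ∨ w = y := by
  by_contra! h
  have hsub : {u, y, w} ⊆ G.neighborFinset b \ B := by
    intro z hz
    simp only [mem_insert, mem_singleton] at hz
    rcases hz with rfl | rfl | rfl <;> simp [*]
  have := card_le_card hsub
  rw [card_eq_three.2 ⟨u, y, w, huy, h.1.symm, h.2.symm, rfl⟩] at this
  have := hB.degOut_le_two hdeg hb
  unfold degOut at this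
  omega

/-- `u` and `y` are the only neighbours of `b` outside `B`, so a closed `B'` cannot contain just one
of them. -/
theorem IsLinked.mem_of_adj_of_mem (hB : G.IsLinked B) (hdeg : ∀ v, G.degree v ≤ 3)
    (hB' : G.IsForcingClosed B') (hBB' : B ⊆ B') {b u y : V} (hb : b ∈ B) (hu : G.Adj b u)
    (hy : G.Adj b y) (huB : u ∉ B) (hyB : y ∉ B) (huy : u ≠ y) (huB' : u ∈ B') :
    y ∈ B' := by
  by_contra hyB'
  obtain ⟨w, hw, hwB', hwy⟩ := hB' b (hBB' hb) y hy hyB'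
  rcases hB.eq_or_eq_of_adj hdeg hb hu hy hw huB hyB (fun h => hwB' (hBB' h)) huy with rfl | rfl
  · exact hwB' huB'
  · exact hwy rfl

theorem IsForcingClosed.exists_adj_mem_sdiff (hB : G.IsForcingClosed B) (hlk : G.IsLinked B)
    (hdeg : ∀ v, G.degree v ≤ 3) (hB' : G.IsForcingClosed B') (hBB' : B ⊆ B') {b v : V}
    (hb : b ∈ B) (hv : G.Adj b v) (hvB : v ∉ B) (hvB' : v ∈ B') :
    ∃ w ∈ B' \ B, G.Adj b w ∧ w ≠ v := by
  obtain ⟨w, hw, hwB, hwv⟩ := hB b hb v hv hvB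
  have hwB' := hlk.mem_of_adj_of_mem hdeg hB' hBB' hb hv hw hvB hwB hwv.symm hvB'
  exact ⟨w, mem_sdiff.2 ⟨hwB', hwB⟩, hw, hwv⟩

theorem IsLinked.zeroForces_insert (hB : G.IsLinked B) (hdeg : ∀ v, G.degree v ≤ 3)
    {b u y : V} (hb : b ∈ B) (hu : G.Adj b u) (hy : G.Adj b y) (huB : u ∉ B) (hyB : y ∉ B)
    (hyu : y ≠ u) :
    G.ZeroForces (insert y ↑B) u := by
  refine .force (.base (Set.mem_insert_of_mem _ hb)) hu fun w hw hwu => ?_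
  by_cases hwB : w ∈ B
  · exact .base (Set.mem_insert_of_mem _ hwB)
  · obtain rfl | rfl := hB.eq_or_eq_of_adj hdeg hb hu hy hw huB hyB hwB hyu.symm
    · exact absurd rfl hwu
    · exact .base (Set.mem_insert _ _)

variable (G) in
theorem sum_card_neighborFinset_inter_comm (A C : Finset V) :
    ∑ v ∈ A, #(G.neighborFinset v ∩ C) = ∑ v ∈ C, #(G.neighborFinset v ∩ A) := by
  have hfilter : ∀ v (S : Finset V), G.neighborFinset v ∩ S = {w ∈ S | G.Adj v w} := by
    intro v S; ext w; simp [and_comm]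
  simp_rw [hfilter]
  refine (sum_card_bipartiteAbove_eq_sum_card_bipartiteBelow (r := G.Adj)).trans
    (sum_congr rfl fun v _ => ?_)
  unfold bipartiteBelow
  exact congrArg card (filter_congr fun _ _ => G.adj_comm _ _)

variable (G) in
def cut (B : Finset V) : ℕ := ∑ v ∈ Bᶜ, G.degIn B v

variable (G) in
def outLeaves (B : Finset V) : ℕ := #{v ∈ Bᶜ | G.degree v = 1}

variable (G) in
def outPendants (B : Finset V) : ℕ := #{v ∈ Bᶜ | G.degree v = 1 ∧ G.degIn B v = 1}

variable (G) in
def potential (B : Finset V) : ℤ :=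
  77 * #Bᶜ + 12 * G.outLeaves B + 2 * G.outPendants B - 7 * G.cut B

theorem cut_add_sum_degIn (h : B ⊆ B') :
    G.cut B' + ∑ v ∈ B' \ B, G.degIn B v = G.cut B + ∑ v ∈ B' \ B, G.degOut B' v := by
  have hout :
      ∑ v ∈ B'ᶜ, #(G.neighborFinset v ∩ (B' \ B)) = ∑ v ∈ B' \ B, G.degOut B' v := by
    rw [sum_card_neighborFinset_inter_comm]
    simp [degOut, sdiff_eq_inter_compl]
  rw [cut, cut, sum_compl_eq_sum_compl_add_sum_sdiff h]
  simp only [degIn_eq_add h, sum_add_distrib]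
  omega

theorem outLeaves_eq_add (h : B ⊆ B') :
    G.outLeaves B = G.outLeaves B' + ∑ v ∈ B' \ B, if G.degree v = 1 then 1 else 0 := by
  simp only [outLeaves, card_filter]
  exact sum_compl_eq_sum_compl_add_sum_sdiff h _

theorem outPendants_le_outLeaves (B : Finset V) : G.outPendants B ≤ G.outLeaves B :=
  card_le_card (monotone_filter_right _ fun _ _ hv => hv.1)

theorem outPendants_le_cut (B : Finset V) : G.outPendants B ≤ G.cut B := by
  calc G.outPendants B = ∑ v ∈ Bᶜ with G.degree v = 1 ∧ G.degIn B v = 1, G.degIn B v := by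
        rw [outPendants, card_eq_sum_ones]
        exact sum_congr rfl fun v hv => ((mem_filter.1 hv).2.2).symm
    _ ≤ G.cut B := sum_le_sum_of_subset (filter_subset _ _)

theorem outPendants_eq_outLeaves (h : ∀ v ∉ B, G.degree v = 1 → G.degIn B v = 1) :
    G.outPendants B = G.outLeaves B := by
  unfold outPendants outLeaves
  congr 1
  exact filter_congr fun v hv => ⟨And.left, fun h1 => ⟨h1, h v (mem_compl.1 hv) h1⟩⟩

theorem outPendants_le_add_sum_degOut (h : B ⊆ B') :
    G.outPendants B' ≤ G.outPendants B + ∑ v ∈ B' \ B, G.degOut B' v := by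
  have hsub : {v ∈ B'ᶜ | G.degree v = 1 ∧ G.degIn B' v = 1} ⊆
      {v ∈ Bᶜ | G.degree v = 1 ∧ G.degIn B v = 1} ∪
        (B' \ B).biUnion (fun t => G.neighborFinset t \ B') := by
    intro w hw
    simp only [mem_filter, mem_compl] at hw
    obtain ⟨hwB', hw1, hwin⟩ := hw
    obtain ⟨x, hx⟩ := card_eq_one.1 ((card_neighborFinset_eq_degree G w).trans hw1)
    have hwx : G.Adj w x := (G.mem_neighborFinset _ _).1 (hx ▸ mem_singleton_self x)
    rw [degIn_of_neighborFinset_eq_singleton hx] at hwin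
    have hxB' : x ∈ B' := by by_contra hxB'; simp [hxB'] at hwin
    by_cases hxB : x ∈ B
    · refine mem_union_left _ (mem_filter.2 ⟨mem_compl.2 fun hwB => hwB' (h hwB), hw1, ?_⟩)
      simp [degIn_of_neighborFinset_eq_singleton hx, hxB]
    · exact mem_union_right _ (mem_biUnion.2 ⟨x, mem_sdiff.2 ⟨hxB', hxB⟩,
        mem_sdiff.2 ⟨(G.mem_neighborFinset _ _).2 hwx.symm, hwB'⟩⟩)
  calc G.outPendants B' ≤ _ := card_le_card hsub
    _ ≤ _ := card_union_le _ _
    _ ≤ _ := Nat.add_le_add_left card_biUnion_le _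

theorem potential_eq_add (h : B ⊆ B') :
    G.potential B = G.potential B' + 77 * #(B' \ B)
      + 12 * ∑ v ∈ B' \ B, (if G.degree v = 1 then 1 else 0 : ℤ)
      + 7 * ∑ v ∈ B' \ B, (G.degOut B' v : ℤ) - 7 * ∑ v ∈ B' \ B, (G.degIn B v : ℤ)
      + 2 * ((G.outPendants B : ℤ) - G.outPendants B') := by
  have hc : (#Bᶜ : ℤ) = #B'ᶜ + #(B' \ B) := by
    exact_mod_cast card_compl_eq_card_compl_add_card_sdiff h
  have he : (G.cut B' : ℤ) + ∑ v ∈ B' \ B, (G.degIn B v : ℤ)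
      = G.cut B + ∑ v ∈ B' \ B, (G.degOut B' v : ℤ) := by exact_mod_cast cut_add_sum_degIn h
  have hl : (G.outLeaves B : ℤ) = G.outLeaves B'
      + ∑ v ∈ B' \ B, (if G.degree v = 1 then 1 else 0 : ℤ) := by
    exact_mod_cast outLeaves_eq_add h
  unfold potential
  linarith

theorem potential_add_sum_le (h : B ⊆ B') :
    G.potential B' + ∑ v ∈ B' \ B, (77 + 12 * (if G.degree v = 1 then 1 else 0)
      + 5 * (G.degOut B' v : ℤ) - 7 * G.degIn B v) ≤ G.potential B := by
  have hp : (G.outPendants B' : ℤ) ≤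
      G.outPendants B + ∑ v ∈ B' \ B, (G.degOut B' v : ℤ) := by
    exact_mod_cast outPendants_le_add_sum_degOut h
  simp only [sum_add_distrib, sum_sub_distrib, ← mul_sum, sum_const, nsmul_eq_mul]
  linarith [potential_eq_add (G := G) h]

theorem potential_add_sum_le_of_leaves (h : B ⊆ B')
    (hleaf : ∀ v ∉ B, G.degree v = 1 → G.degIn B v = 1) :
    G.potential B' + ∑ v ∈ B' \ B, (77 + 14 * (if G.degree v = 1 then 1 else 0)
      + 7 * (G.degOut B' v : ℤ) - 7 * G.degIn B v) ≤ G.potential B := by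
  have hl : (G.outLeaves B : ℤ) = G.outLeaves B'
      + ∑ v ∈ B' \ B, (if G.degree v = 1 then 1 else 0 : ℤ) := by
    exact_mod_cast outLeaves_eq_add h
  have hp : (G.outPendants B' : ℤ) ≤ G.outLeaves B' := by
    exact_mod_cast outPendants_le_outLeaves B'
  have hp' : (G.outPendants B : ℤ) = G.outLeaves B := by
    exact_mod_cast outPendants_eq_outLeaves hleaf
  simp only [sum_add_distrib, sum_sub_distrib, ← mul_sum, sum_const, nsmul_eq_mul]
  linarith [potential_eq_add (G := G) h]

theorem potential_add_le (hdeg : ∀ v, G.degree v ≤ 3) (h : B ⊆ B') :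
    G.potential B' + 56 * #(B' \ B) ≤ G.potential B := by
  have hv : ∀ v ∈ B' \ B, (56 : ℤ) ≤ 77 + 12 * (if G.degree v = 1 then 1 else 0)
      + 5 * (G.degOut B' v : ℤ) - 7 * G.degIn B v := fun v _ => by
    have := G.degIn_add_degOut B v
    have := hdeg v
    split_ifs <;> omega
  have := card_nsmul_le_sum _ _ _ hv
  rw [nsmul_eq_mul] at this
  linarith [potential_add_sum_le (G := G) h]

theorem potential_univ : G.potential univ = 0 := by
  simp [potential, cut, outLeaves, outPendants]

theorem potential_add_le_of_mem_sdiff (hdeg : ∀ v, G.degree v ≤ 3) (h : B ⊆ B') {p q : V}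
    (hp : p ∈ B' \ B) (hq : q ∈ B' \ B) (hpq : p ≠ q)
    (hpair : B' \ B = {p, q} → G.potential B' + 168 ≤ G.potential B) :
    G.potential B' + 168 ≤ G.potential B := by
  by_cases h3 : 3 ≤ #(B' \ B)
  · have := potential_add_le hdeg h
    have : (3 : ℤ) ≤ #(B' \ B) := by exact_mod_cast h3
    linarith
  · refine hpair (eq_of_subset_of_card_le ?_ ?_).symm
    · intro z hz
      rw [mem_insert, mem_singleton] at hz
      rcases hz with rfl | rfl <;> assumption
    · rw [card_pair hpq]
      omega

theorem potential_add_le_of_leaf (hdeg : ∀ v, G.degree v ≤ 3) (hB : G.IsForcingClosed B)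
    (hlk : G.IsLinked B) (hB' : G.IsForcingClosed B') (h : B ⊆ B') {l x : V}
    (hlx : G.neighborFinset l = {x}) (hl : l ∈ B' \ B) (hx : x ∈ B' \ B) :
    G.potential B' + 168 ≤ G.potential B := by
  have hadj : G.Adj l x := (G.mem_neighborFinset _ _).1 (hlx ▸ mem_singleton_self x)
  refine potential_add_le_of_mem_sdiff hdeg h hl hx hadj.ne fun hT => ?_
  obtain ⟨hxB', hxB⟩ := mem_sdiff.1 hx
  -- a neighbour of `x` in `B` has a second new neighbour in `{l, x}`, so it is adjacent to `l`
  have hx₀ : G.degIn B x = 0 := by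
    refine card_eq_zero.2 (eq_empty_of_forall_notMem fun b hb => ?_)
    obtain ⟨hbx, hb⟩ := mem_inter.1 hb
    rw [mem_neighborFinset] at hbx
    obtain ⟨w, hw, hbw, hwx⟩ := hB.exists_adj_mem_sdiff hlk hdeg hB' h hb hbx.symm hxB hxB'
    rw [hT, mem_insert, mem_singleton] at hw
    rcases hw with rfl | rfl
    · have hbl : b ∈ G.neighborFinset w := (G.mem_neighborFinset _ _).2 hbw.symm
      rw [hlx, mem_singleton] at hbl
      exact hxB (hbl ▸ hb)
    · exact hwx rfl
  have hvert : ∀ v ∈ B' \ B, G.degIn B v = 0 ∧ G.degIn B' v = 1 := by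
    intro v hv
    rw [hT, mem_insert, mem_singleton] at hv
    rcases hv with rfl | rfl
    · have h₀ : G.degIn B v = 0 := by simp [degIn_of_neighborFinset_eq_singleton hlx, hxB]
      rw [degIn_eq_add h, h₀, hT, hlx, singleton_inter_of_mem (mem_insert_of_mem
        (mem_singleton_self x)), card_singleton]
      exact ⟨rfl, rfl⟩
    · rw [degIn_eq_add h, hx₀, hT, inter_insert_of_mem ((G.mem_neighborFinset _ _).2 hadj.symm),
        inter_singleton_of_notMem (G.notMem_neighborFinset_self v)]
      exact ⟨rfl, rfl⟩
  have hsum : ∀ v ∈ B' \ B, (84 : ℤ) ≤ 77 + 12 * (if G.degree v = 1 then 1 else 0)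
      + 5 * (G.degOut B' v : ℤ) - 7 * G.degIn B v := by
    intro v hv
    obtain ⟨h₀, h₁⟩ := hvert v hv
    rcases hB'.degree_eq_one_or_three hdeg (mem_sdiff.1 hv).1 h₁ with ⟨hd, ho⟩ | ⟨hd, ho⟩
    all_goals simp [h₀, hd, ho]
  have hcard : #(B' \ B) = 2 := hT ▸ card_pair hadj.ne
  have := card_nsmul_le_sum _ _ _ hsum
  rw [hcard, nsmul_eq_mul, Nat.cast_ofNat] at this
  linarith [potential_add_sum_le (G := G) h]

theorem degIn_eq_one_of_sdiff_eq_pair (hdeg : ∀ v, G.degree v ≤ 3) (hg : 5 ≤ G.egirth)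
    (hB : G.IsForcingClosed B) (hlk : G.IsLinked B) (hB' : G.IsForcingClosed B') (h : B ⊆ B')
    {b v o : V} (hb : b ∈ B) (hbv : G.Adj b v) (hbo : G.Adj b o) (hvo : v ≠ o)
    (hT : B' \ B = {v, o}) : G.degIn B v = 1 ∧ G.degIn B' v = 1 := by
  obtain ⟨hvB', hvB⟩ := mem_sdiff.1 (hT ▸ mem_insert_self v {o})
  -- a second neighbour `b'` of `v` in `B` has `o` as its other new neighbour: a 4-cycle `b v b' o`
  have hin : G.neighborFinset v ∩ B = {b} := by
    refine eq_singleton_iff_unique_mem.2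
      ⟨mem_inter.2 ⟨(G.mem_neighborFinset _ _).2 hbv.symm, hb⟩, fun b' hb' => ?_⟩
    obtain ⟨hb'v, hb'B⟩ := mem_inter.1 hb'
    rw [mem_neighborFinset] at hb'v
    obtain ⟨w, hw, hb'w, hwv⟩ := hB.exists_adj_mem_sdiff hlk hdeg hB' h hb'B hb'v.symm hvB hvB'
    rw [hT, mem_insert, mem_singleton] at hw
    rcases hw with rfl | rfl
    · exact absurd rfl hwv
    · exact (eq_of_adj_of_five_le_egirth hg hvo hbv hbo hb'v.symm hb'w).symm
  have hdegIn : G.degIn B v = 1 := by rw [degIn, hin, card_singleton]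
  have hvo' : o ∉ G.neighborFinset v := fun hvo' =>
    not_adj_of_four_le_egirth (le_trans (by norm_num) hg) hbv
      ((G.mem_neighborFinset _ _).1 hvo') hbo.symm
  rw [degIn_eq_add h, hdegIn, hT, inter_insert_of_notMem (G.notMem_neighborFinset_self v),
    inter_singleton_of_notMem hvo']
  exact ⟨rfl, rfl⟩

theorem potential_add_le_of_boundary (hdeg : ∀ v, G.degree v ≤ 3) (hg : 5 ≤ G.egirth)
    (hB : G.IsForcingClosed B) (hlk : G.IsLinked B) (hB' : G.IsForcingClosed B') (h : B ⊆ B')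
    (hleaf : ∀ v ∉ B, G.degree v = 1 → G.degIn B v = 1) {b u y : V} (hb : b ∈ B)
    (hbu : G.Adj b u) (hby : G.Adj b y) (hu : u ∈ B' \ B) (hy : y ∈ B' \ B) (huy : u ≠ y) :
    G.potential B' + 168 ≤ G.potential B := by
  refine potential_add_le_of_mem_sdiff hdeg h hu hy huy fun hT => ?_
  have hvert : ∀ v ∈ B' \ B, G.degIn B v = 1 ∧ G.degIn B' v = 1 := by
    intro v hv
    rw [hT, mem_insert, mem_singleton] at hv
    rcases hv with rfl | rfl
    · exact degIn_eq_one_of_sdiff_eq_pair hdeg hg hB hlk hB' h hb hbu hby huy hT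
    · exact degIn_eq_one_of_sdiff_eq_pair hdeg hg hB hlk hB' h hb hby hbu huy.symm
        (hT.trans (pair_comm _ _))
  have hsum : ∀ v ∈ B' \ B, (84 : ℤ) ≤ 77 + 14 * (if G.degree v = 1 then 1 else 0)
      + 7 * (G.degOut B' v : ℤ) - 7 * G.degIn B v := by
    intro v hv
    obtain ⟨h₀, h₁⟩ := hvert v hv
    rcases hB'.degree_eq_one_or_three hdeg (mem_sdiff.1 hv).1 h₁ with ⟨hd, ho⟩ | ⟨hd, ho⟩
    all_goals simp [h₀, hd, ho]
  have hcard : #(B' \ B) = 2 := hT ▸ card_pair huy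
  have := card_nsmul_le_sum _ _ _ hsum
  rw [hcard, nsmul_eq_mul, Nat.cast_ofNat] at this
  linarith [potential_add_sum_le_of_leaves (G := G) h hleaf]

theorem exists_potential_zfClosureFinset_insert_add_le (hdeg : ∀ v, G.degree v ≤ 3)
    (hg : 5 ≤ G.egirth) (hpre : G.Preconnected) (hB : G.IsForcingClosed B) (hlk : G.IsLinked B)
    (hne : B.Nonempty) (hnu : B ≠ univ) :
    ∃ y, G.IsLinked (G.zfClosureFinset (insert y ↑B)) ∧
      2 ≤ #(G.zfClosureFinset (insert y ↑B) \ B) ∧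
      G.potential (G.zfClosureFinset (insert y ↑B)) + 168 ≤ G.potential B := by
  have hB' := fun y => isForcingClosed_zfClosureFinset (G := G) (insert y ↑B)
  by_cases hleaf : ∀ v ∉ B, G.degree v = 1 → G.degIn B v = 1
  · obtain ⟨b, hb, u, hu, hbu⟩ := hpre.exists_adj_mem_notMem hne hnu
    obtain ⟨y, hby, hyB, hyu⟩ := hB b hb u hbu hu
    have hbF : G.ZeroForces (insert y ↑B) b := .base (Set.mem_insert_of_mem _ hb)
    have hu' : u ∈ G.zfClosureFinset (insert y ↑B) \ B :=
      mem_sdiff.2 ⟨mem_zfClosureFinset.2 (hlk.zeroForces_insert hdeg hb hbu hby hu hyB hyu), hu⟩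
    have hy' : y ∈ G.zfClosureFinset (insert y ↑B) \ B :=
      mem_sdiff.2 ⟨mem_zfClosureFinset_insert B y, hyB⟩
    exact ⟨y, hlk.zfClosureFinset_insert hby.symm hbF,
      one_lt_card.2 ⟨u, hu', y, hy', hyu.symm⟩,
      potential_add_le_of_boundary hdeg hg hB hlk (hB' y) (subset_zfClosureFinset_insert B y)
        hleaf hb hbu hby hu' hy' hyu.symm⟩
  · push Not at hleaf
    obtain ⟨l, hlB, hl₁, hlB'⟩ := hleaf
    obtain ⟨x, hx⟩ := card_eq_one.1 ((card_neighborFinset_eq_degree G l).trans hl₁)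
    have hxB : x ∉ B := fun hxB => hlB' (by simp [degIn_of_neighborFinset_eq_singleton hx, hxB])
    have hlx : G.Adj l x := (G.mem_neighborFinset _ _).1 (hx ▸ mem_singleton_self x)
    have hxF := zeroForces_insert_of_neighborFinset_eq_singleton (Z := ↑B) hx
    have hl' : l ∈ G.zfClosureFinset (insert l ↑B) \ B :=
      mem_sdiff.2 ⟨mem_zfClosureFinset_insert B l, hlB⟩
    have hx' : x ∈ G.zfClosureFinset (insert l ↑B) \ B :=
      mem_sdiff.2 ⟨mem_zfClosureFinset.2 hxF, hxB⟩
    exact ⟨l, hlk.zfClosureFinset_insert hlx hxF, one_lt_card.2 ⟨l, hl', x, hx', hlx.ne⟩,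
      potential_add_le_of_leaf hdeg hB hlk (hB' l) (subset_zfClosureFinset_insert B l) hx hl' hx'⟩

theorem exists_isZeroForcingSet_union (hdeg : ∀ v, G.degree v ≤ 3) (hg : 5 ≤ G.egirth)
    (hpre : G.Preconnected) (B : Finset V) (hB : G.IsForcingClosed B) (hlk : G.IsLinked B)
    (hne : B.Nonempty) :
    ∃ X : Finset V, G.IsZeroForcingSet (↑B ∪ ↑X) ∧ 168 * (#X : ℤ) ≤ G.potential B ∧
      2 * #X ≤ #Bᶜ := by
  induction hk : #Bᶜ using Nat.strong_induction_on generalizing B with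
  | _ k ih =>
  by_cases hnu : B = univ
  · subst hnu
    exact ⟨∅, fun v => .base (Set.mem_union_left _ (mem_univ v)), by simp [potential_univ],
      by simp⟩
  obtain ⟨y, hlk', hcard, hpot⟩ :=
    exists_potential_zfClosureFinset_insert_add_le hdeg hg hpre hB hlk hne hnu
  have hBB' := subset_zfClosureFinset_insert (G := G) B y
  have hc := card_compl_eq_card_compl_add_card_sdiff hBB'
  obtain ⟨X, hX, h168, h2⟩ := ih _ (by omega) _ (isForcingClosed_zfClosureFinset _) hlk'
    (hne.mono hBB') rfl
  have hXy := card_insert_le y X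
  refine ⟨insert y X, (isZeroForcingSet_of_zfClosureFinset_union hX).mono ?_, ?_, by omega⟩
  · intro z
    simp only [coe_insert, Set.mem_union, Set.mem_insert_iff, mem_coe]
    tauto
  · have : (#(insert y X) : ℤ) ≤ #X + 1 := by exact_mod_cast hXy
    linarith

theorem potential_le (hconn : G.Connected) (hdeg : ∀ v, G.degree v ≤ 3) (B : Finset V) :
    G.potential B ≤ 77 * #Bᶜ + 6 * Fintype.card V + 12 := by
  have h₁ : G.outLeaves B ≤ #{v | G.degree v = 1} :=
    card_le_card (filter_subset_filter _ (subset_univ _))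
  have h₂ := hconn.two_mul_card_degree_eq_one_le hdeg
  have h₃ := outPendants_le_cut (G := G) B
  unfold potential
  omega

theorem exists_zeroForcingNumber_le_add_two (hconn : G.Connected) (hdeg : ∀ v, G.degree v ≤ 3)
    (hg : 5 ≤ G.egirth) {v w : V} (hvw : G.Adj v w) :
    ∃ x : ℕ, G.zeroForcingNumber ≤ x + 2 ∧ 168 * x + 142 ≤ 83 * Fintype.card V ∧
      2 * x + 2 ≤ Fintype.card V := by
  set B := G.zfClosureFinset {v, w}
  have hvwB : ({v, w} : Finset V) ⊆ B := fun z hz => subset_zfClosureFinset _ (by simpa using hz)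
  have hlk : G.IsLinked B := isLinked_zfClosureFinset <| by
    rintro z (rfl | rfl)
    exacts [⟨w, hvw, .base (by simp)⟩, ⟨v, hvw.symm, .base (by simp)⟩]
  obtain ⟨X, hX, h168, h2⟩ := exists_isZeroForcingSet_union hdeg hg hconn.preconnected B
    (isForcingClosed_zfClosureFinset _) hlk ⟨v, hvwB (by simp)⟩
  have hZ : G.zeroForcingNumber ≤ #X + 2 := by
    refine (zeroForcingNumber_le_card (Z := {v, w} ∪ X) ?_).trans ((card_union_le _ _).trans ?_)
    · rw [coe_union, coe_pair]
      exact isZeroForcingSet_of_zfClosureFinset_union hX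
    · rw [card_pair hvw.ne]
      omega
  have hBc : #Bᶜ + 2 ≤ Fintype.card V := by
    have := card_le_card hvwB
    rw [card_pair hvw.ne] at this
    rw [card_compl]
    have := card_le_univ B
    omega
  have hpot := potential_le hconn hdeg B
  exact ⟨#X, hZ, by omega, by omega⟩

end Degrees

end SimpleGraph

open SimpleGraph

theorem natCast_le_logb_two {k n : ℕ} (h : 2 ^ k ≤ n) : (k : ℝ) ≤ Real.logb 2 n := by
  have hn : (0 : ℝ) < n := by exact_mod_cast (Nat.two_pow_pos k).trans_le h
  rw [Real.le_logb_iff_rpow_le one_lt_two hn, Real.rpow_natCast]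
  exact_mod_cast h

/-- For `n ≥ 128` the denominator exceeds `168`; below that it exceeds `n`. -/
theorem natCast_le_half_sub_div_logb {n x : ℕ} (h₁ : 168 * x + 142 ≤ 83 * n)
    (h₂ : 2 * x + 2 ≤ n) : (x : ℝ) ≤ n / 2 - n / (24 * Real.logb 2 n + 6) := by
  have hL₁ : (1 : ℝ) ≤ Real.logb 2 n := by
    exact_mod_cast natCast_le_logb_two (k := 1) (by omega)
  have hD : 0 < 24 * Real.logb 2 n + 6 := by linarith
  have hx₁ : (168 * x + 142 : ℝ) ≤ 83 * n := by exact_mod_cast h₁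
  have hx₂ : (2 * x + 2 : ℝ) ≤ n := by exact_mod_cast h₂
  rcases le_or_gt 128 n with hn | hn
  · have hL₇ : (7 : ℝ) ≤ Real.logb 2 n := by exact_mod_cast natCast_le_logb_two (k := 7) hn
    have : (n : ℝ) / (24 * Real.logb 2 n + 6) ≤ n / 168 :=
      div_le_div_of_nonneg_left (by positivity) (by norm_num) (by linarith)
    linarith
  · have hnD : (n : ℝ) ≤ 24 * Real.logb 2 n + 6 := by
      rcases le_or_gt n 30 with h30 | h30
      · have : (n : ℝ) ≤ 30 := by exact_mod_cast h30
        linarith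
      rcases le_or_gt n 63 with h63 | h63
      · have hL₄ : (4 : ℝ) ≤ Real.logb 2 n := by
          exact_mod_cast natCast_le_logb_two (k := 4) (by omega)
        have : (n : ℝ) ≤ 63 := by exact_mod_cast h63
        linarith
      · have hL₆ : (6 : ℝ) ≤ Real.logb 2 n := by
          exact_mod_cast natCast_le_logb_two (k := 6) (by omega)
        have : (n : ℝ) ≤ 127 := by exact_mod_cast Nat.lt_succ_iff.1 hn
        linarith
    have : (n : ℝ) / (24 * Real.logb 2 n + 6) ≤ 1 := (div_le_one hD).2 hnD
    linarith

theorem stmt18 {V : Type*} [Fintype V] (G : SimpleGraph V) [DecidableRel G.Adj]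
    (hconn : G.Connected) (hmax : G.maxDegree = 3) (hg : 5 ≤ G.egirth) :
    (G.zeroForcingNumber : ℝ) ≤ (Fintype.card V : ℝ) / 2 -
      (Fintype.card V : ℝ) / (24 * Real.logb 2 (Fintype.card V) + 6) + 2 := by
  classical
  have hdeg : ∀ v, G.degree v ≤ 3 := fun v => hmax ▸ G.degree_le_maxDegree v
  have := hconn.nonempty
  obtain ⟨v, hv⟩ := G.exists_maximal_degree_vertex
  obtain ⟨w, hvw⟩ := (G.degree_pos_iff_exists_adj v).1 (by omega : 0 < G.degree v)
  obtain ⟨x, hZ, h₁, h₂⟩ := exists_zeroForcingNumber_le_add_two hconn hdeg hg hvw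
  have hx := natCast_le_half_sub_div_logb h₁ h₂
  have : (G.zeroForcingNumber : ℝ) ≤ x + 2 := by exact_mod_cast hZ
  linarith
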